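/- For p, q in the Poincaré ball of radius r, the triangle inequality through the origin gives d_D(p, q) ≤ d_D(p, 0) + d_D(0, q), i.e., 2r·arctanh(||(−p)⊕q||/r) ≤ 2r·arctanh(||p||/r) + 2r·arctanh(||q||/r). -/

import Mathlib

/-! The Möbius gyronorm inequality `‖a ⊕ b‖/r ≤ (x + y)/(1 + x y)`, with `x = ‖a‖/r`, `y = ‖b‖/r`,
turns into the triangle inequality through `0` under the addition formula for `artanh`,
`artanh x + artanh y = artanh ((x + y)/(1 + x y))`. The gyronorm inequality itself comes from
`‖a ⊕ b‖² = ‖a + b‖² / (1 + 2⟪a, b⟫/r² + ‖a‖²‖b‖²/r⁴)`: after normalising, the bound is affine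
in `c = ⟪a, b⟫/r²`, holds with equality at `c = x y`, and Cauchy–Schwarz gives `c ≤ x y`. -/

noncomputable def artanh (x : ℝ) : ℝ := (1 / 2) * Real.log ((1 + x) / (1 - x))

noncomputable def mobiusAdd (r : ℝ) {n : ℕ} (a b : EuclideanSpace ℝ (Fin n)) :
    EuclideanSpace ℝ (Fin n) :=
  (1 / (1 + 2 * (inner ℝ a b : ℝ) / r ^ 2 + ‖a‖ ^ 2 * ‖b‖ ^ 2 / r ^ 4)) •
    ((1 + 2 * (inner ℝ a b : ℝ) / r ^ 2 + ‖b‖ ^ 2 / r ^ 2) • a + (1 - ‖a‖ ^ 2 / r ^ 2) • b)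

noncomputable def pDist (r : ℝ) {n : ℕ} (p q : EuclideanSpace ℝ (Fin n)) : ℝ :=
  2 * r * artanh (‖mobiusAdd r (-p) q‖ / r)

lemma artanh_eq_real_artanh {x : ℝ} (hx : x ∈ Set.Icc (-1) 1) : artanh x = Real.artanh x :=
  (Real.artanh_eq_half_log hx).symm

lemma artanh_le_artanh {x y : ℝ} (hx : -1 < x) (hy : y < 1) (hxy : x ≤ y) :
    artanh x ≤ artanh y := by
  rw [artanh_eq_real_artanh ⟨hx.le, by linarith⟩, artanh_eq_real_artanh ⟨by linarith, hy.le⟩]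
  exact Real.artanh_le_artanh hx hy hxy

lemma artanh_add {x y : ℝ} (hx : |x| < 1) (hy : |y| < 1) :
    artanh x + artanh y = artanh ((x + y) / (1 + x * y)) := by
  obtain ⟨hx₀, hx₁⟩ := abs_lt.mp hx
  obtain ⟨hy₀, hy₁⟩ := abs_lt.mp hy
  have hxy : 0 < 1 + x * y := by nlinarith
  have hquot : (1 + (x + y) / (1 + x * y)) / (1 - (x + y) / (1 + x * y))
      = (1 + x) / (1 - x) * ((1 + y) / (1 - y)) := by
    rw [one_add_div hxy.ne', one_sub_div hxy.ne', div_div_div_cancel_right₀ hxy.ne',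
      div_mul_div_comm]
    congr 1 <;> ring
  unfold artanh
  rw [hquot, Real.log_mul (div_pos (by linarith) (by linarith)).ne'
    (div_pos (by linarith) (by linarith)).ne']
  ring

lemma add_div_one_add_mul_lt_one {x y : ℝ} (hx : |x| < 1) (hy : |y| < 1) :
    (x + y) / (1 + x * y) < 1 := by
  obtain ⟨hx₀, hx₁⟩ := abs_lt.mp hx
  obtain ⟨hy₀, hy₁⟩ := abs_lt.mp hy
  rw [div_lt_one (by nlinarith)]
  nlinarith

lemma abs_norm_div_lt_one {E : Type*} [SeminormedAddGroup E] {r : ℝ} {a : E} (ha : ‖a‖ < r) :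
    |‖a‖ / r| < 1 := by
  have hr : 0 < r := (norm_nonneg a).trans_lt ha
  rw [abs_of_nonneg (by positivity), div_lt_one hr]
  exact ha

lemma mobiusAdd_zero_right (r : ℝ) {n : ℕ} (a : EuclideanSpace ℝ (Fin n)) :
    mobiusAdd r a 0 = a := by
  simp [mobiusAdd]

lemma mobiusAdd_zero_left (r : ℝ) {n : ℕ} (b : EuclideanSpace ℝ (Fin n)) :
    mobiusAdd r 0 b = b := by
  simp [mobiusAdd]

/-- Where the denominator vanishes, both sides are `0` by the convention `x / 0 = 0`. -/
lemma norm_mobiusAdd_sq (r : ℝ) {n : ℕ} (a b : EuclideanSpace ℝ (Fin n)) :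
    ‖mobiusAdd r a b‖ ^ 2 =
      ‖a + b‖ ^ 2 / (1 + 2 * (inner ℝ a b : ℝ) / r ^ 2 + ‖a‖ ^ 2 * ‖b‖ ^ 2 / r ^ 4) := by
  unfold mobiusAdd
  set D := 1 + 2 * (inner ℝ a b : ℝ) / r ^ 2 + ‖a‖ ^ 2 * ‖b‖ ^ 2 / r ^ 4
  set A := 1 + 2 * (inner ℝ a b : ℝ) / r ^ 2 + ‖b‖ ^ 2 / r ^ 2
  set B := 1 - ‖a‖ ^ 2 / r ^ 2
  have hnum : ‖A • a + B • b‖ ^ 2 = D * ‖a + b‖ ^ 2 := by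
    rw [norm_add_sq_real, norm_add_sq_real, norm_smul, norm_smul, real_inner_smul_left,
      real_inner_smul_right, Real.norm_eq_abs, Real.norm_eq_abs, mul_pow, mul_pow, sq_abs, sq_abs]
    ring
  rw [norm_smul, mul_pow, hnum, Real.norm_eq_abs, sq_abs]
  rcases eq_or_ne D 0 with hD | hD
  · simp [hD]
  · field_simp

lemma mobius_norm_sq_le_of_abs_le_mul {x y c : ℝ} (hx : |x| < 1) (hy : |y| < 1)
    (hc : |c| ≤ x * y) :
    (x ^ 2 + 2 * c + y ^ 2) / (1 + 2 * c + x ^ 2 * y ^ 2) ≤ ((x + y) / (1 + x * y)) ^ 2 := by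
  obtain ⟨hc₀, hc₁⟩ := abs_le.mp hc
  have hx₂ : 0 ≤ 1 - x ^ 2 := by nlinarith [(sq_lt_one_iff_abs_lt_one x).mpr hx]
  have hy₂ : 0 ≤ 1 - y ^ 2 := by nlinarith [(sq_lt_one_iff_abs_lt_one y).mpr hy]
  have hxy : x * y < 1 := by nlinarith [abs_lt.mp hx, abs_lt.mp hy]
  have hden : 0 < 1 + 2 * c + x ^ 2 * y ^ 2 := by nlinarith
  have hgap : (x + y) ^ 2 * (1 + 2 * c + x ^ 2 * y ^ 2) - (x ^ 2 + 2 * c + y ^ 2) * (1 + x * y) ^ 2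
      = 2 * (x * y - c) * (1 - x ^ 2) * (1 - y ^ 2) := by ring
  rw [div_pow, div_le_div_iff₀ hden (by nlinarith)]
  nlinarith [mul_nonneg (mul_nonneg (sub_nonneg.mpr hc₁) hx₂) hy₂]

lemma norm_mobiusAdd_div_le {r : ℝ} {n : ℕ} {a b : EuclideanSpace ℝ (Fin n)}
    (ha : ‖a‖ < r) (hb : ‖b‖ < r) :
    ‖mobiusAdd r a b‖ / r ≤ (‖a‖ / r + ‖b‖ / r) / (1 + ‖a‖ / r * (‖b‖ / r)) := by
  have hr : 0 < r := (norm_nonneg a).trans_lt ha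
  have hc : |inner ℝ a b / r ^ 2| ≤ ‖a‖ / r * (‖b‖ / r) := by
    rw [abs_div, abs_of_pos (by positivity : (0:ℝ) < r ^ 2), div_mul_div_comm, ← sq]
    gcongr
    exact abs_real_inner_le_norm a b
  have hnorm : (‖mobiusAdd r a b‖ / r) ^ 2 = ((‖a‖ / r) ^ 2 + 2 * (inner ℝ a b / r ^ 2)
      + (‖b‖ / r) ^ 2) / (1 + 2 * (inner ℝ a b / r ^ 2) + (‖a‖ / r) ^ 2 * (‖b‖ / r) ^ 2) := by
    rw [div_pow, norm_mobiusAdd_sq, norm_add_sq_real]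
    field_simp
  rw [← pow_le_pow_iff_left₀ (by positivity) (by positivity) two_ne_zero, hnorm]
  exact mobius_norm_sq_le_of_abs_le_mul (abs_norm_div_lt_one ha) (abs_norm_div_lt_one hb) hc

theorem pDist_triangle_through_origin {n : ℕ} (r : ℝ) (hr : 0 < r)
    (p q : EuclideanSpace ℝ (Fin n)) (hp : ‖p‖ < r) (hq : ‖q‖ < r) :
    pDist r p q ≤ pDist r p 0 + pDist r 0 q := by
  have hx : |‖p‖ / r| < 1 := abs_norm_div_lt_one hp
  have hy : |‖q‖ / r| < 1 := abs_norm_div_lt_one hq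
  have hgyro : ‖mobiusAdd r (-p) q‖ / r ≤ (‖p‖ / r + ‖q‖ / r) / (1 + ‖p‖ / r * (‖q‖ / r)) := by
    simpa only [norm_neg] using norm_mobiusAdd_div_le (a := -p) (by rwa [norm_neg]) hq
  have hartanh : artanh (‖mobiusAdd r (-p) q‖ / r) ≤ artanh (‖p‖ / r) + artanh (‖q‖ / r) := by
    rw [artanh_add hx hy]
    exact artanh_le_artanh (by linarith [div_nonneg (norm_nonneg (mobiusAdd r (-p) q)) hr.le])
      (add_div_one_add_mul_lt_one hx hy) hgyro
  simp only [pDist, mobiusAdd_zero_right, mobiusAdd_zero_left, norm_neg, neg_zero]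
  rw [← mul_add]
  exact mul_le_mul_of_nonneg_left hartanh (by positivity)
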